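/- Let T be a continuous time-to-event random variable with proportional hazard λ_i(t) = λ₀(t)·exp(x_i'β), where λ₀ is a nonnegative integrable baseline hazard. Then the grouped-time conditional failure probability over interval [a_{τ-1}, a_τ) satisfies P(T ∈ [a_{τ-1}, a_τ) | T ≥ a_{τ-1}) = 1 - exp(-exp(x_i'β + ψ_τ)), where ψ_τ = log ∫_{a_{τ-1}}^{a_τ} λ₀(u) du (assuming this integral is positive and finite). -/

import Mathlib

open MeasureTheory ProbabilityTheory

/-!
Under proportional hazards the survival function is `S(t) = exp (-exp (x'β) Λ₀(t))` with
`Λ₀(t) = ∫₀ᵗ λ₀`. The conditional failure probability over `[a₀, a₁)` is `1 - S(a₁) / S(a₀)`,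
and the ratio of survival values is `exp (-exp (x'β) ∫_{a₀}^{a₁} λ₀) = exp (-exp (x'β + ψ))`.
-/

theorem cond_mem_Ico_toReal_eq_one_sub_div {Ω : Type*} [MeasurableSpace Ω] (μ : Measure Ω)
    {T : Ω → ℝ} (hT : Measurable T) {a₀ a₁ : ℝ} (h : a₀ ≤ a₁)
    (h₀ : μ {ω | a₀ ≤ T ω} ≠ 0) (hfin : μ {ω | a₀ ≤ T ω} ≠ ⊤) :
    (μ[|{ω | a₀ ≤ T ω}] {ω | T ω ∈ Set.Ico a₀ a₁}).toReal
      = 1 - (μ {ω | a₁ ≤ T ω}).toReal / (μ {ω | a₀ ≤ T ω}).toReal := by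
  have hmeas : ∀ a, MeasurableSet {ω | a ≤ T ω} := fun a => hT measurableSet_Ici
  have hsub : {ω | a₁ ≤ T ω} ⊆ {ω | a₀ ≤ T ω} := fun ω hω => h.trans hω
  have hinter : {ω | a₀ ≤ T ω} ∩ {ω | T ω ∈ Set.Ico a₀ a₁}
      = {ω | a₀ ≤ T ω} \ {ω | a₁ ≤ T ω} := by
    ext ω
    simp only [Set.mem_inter_iff, Set.mem_ofPred_eq, Set.mem_Ico, Set.mem_sdiff, not_le]
    tauto
  have hdiff := measure_sdiff hsub (hmeas a₁).nullMeasurableSet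
    (ne_top_of_le_ne_top hfin (measure_mono hsub))
  rw [cond_apply (hmeas a₀), hinter, hdiff, ENNReal.toReal_mul, ENNReal.toReal_inv,
    ENNReal.toReal_sub_of_le (measure_mono hsub) hfin, inv_mul_eq_div, sub_div,
    div_self (ENNReal.toReal_ne_zero.mpr ⟨h₀, hfin⟩)]

theorem exp_neg_mul_integral_div_exp_neg_mul_integral {f : ℝ → ℝ} {a₀ a₁ : ℝ}
    (h₀ : IntervalIntegrable f volume 0 a₀) (h₁ : IntervalIntegrable f volume 0 a₁) (c : ℝ) :
    Real.exp (-c * ∫ u in (0:ℝ)..a₁, f u) / Real.exp (-c * ∫ u in (0:ℝ)..a₀, f u)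
      = Real.exp (-c * ∫ u in a₀..a₁, f u) := by
  rw [← Real.exp_sub, ← mul_sub, intervalIntegral.integral_interval_sub_left h₁ h₀]

theorem prentice_gloeckler_cloglog_general
    {Ω : Type*} [MeasurableSpace Ω] (μ : Measure Ω)
    (T : Ω → ℝ) (hT : Measurable T)
    (lam0 : ℝ → ℝ)
    (hint : ∀ s t : ℝ, IntervalIntegrable lam0 volume s t)
    {n : ℕ} (x β : Fin n → ℝ)
    (hS : ∀ t : ℝ, 0 ≤ t →
      (μ {ω | t ≤ T ω}).toReal
        = Real.exp (-(Real.exp (∑ i, x i * β i)) * ∫ u in (0:ℝ)..t, lam0 u))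
    (a0 a1 : ℝ) (h0 : 0 ≤ a0) (h01 : a0 ≤ a1)
    (ψ : ℝ) (hψ : ψ = Real.log (∫ u in a0..a1, lam0 u))
    (hpos : 0 < ∫ u in a0..a1, lam0 u) :
    (μ[|{ω | a0 ≤ T ω}] {ω | T ω ∈ Set.Ico a0 a1}).toReal
      = 1 - Real.exp (-Real.exp ((∑ i, x i * β i) + ψ)) := by
  have hS0 := hS a0 h0
  -- `S(a₀) > 0`, so the conditioning event is neither null nor of infinite measure.
  obtain ⟨hpos0, hfin0⟩ := ENNReal.toReal_pos_iff.mp (hS0 ▸ Real.exp_pos _)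
  rw [cond_mem_Ico_toReal_eq_one_sub_div μ hT h01 hpos0.ne' hfin0.ne, hS a1 (h0.trans h01), hS0,
    exp_neg_mul_integral_div_exp_neg_mul_integral (hint 0 a0) (hint 0 a1), neg_mul,
    Real.exp_add, hψ, Real.exp_log hpos]

/-- Prentice–Gloeckler (1978): grouping a continuous-time proportional hazards model with
hazard `λ₀(t)·exp(x'β)` yields a cloglog model: the conditional failure probability over
`[a_{τ-1}, a_τ)` is `1 - exp(-exp(x'β + ψ_τ))` with `ψ_τ = log ∫_{a_{τ-1}}^{a_τ} λ₀`. -/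
theorem prentice_gloeckler_cloglog
    {Ω : Type*} [MeasurableSpace Ω] (μ : Measure Ω) [IsProbabilityMeasure μ]
    (T : Ω → ℝ) (hT : Measurable T)
    (lam0 : ℝ → ℝ) (hlam0 : ∀ t, 0 ≤ lam0 t)
    (hint : ∀ s t : ℝ, IntervalIntegrable lam0 volume s t)
    {n : ℕ} (x β : Fin n → ℝ)
    (hS : ∀ t : ℝ, 0 ≤ t →
      (μ {ω | t ≤ T ω}).toReal
        = Real.exp (-(Real.exp (∑ i, x i * β i)) * ∫ u in (0:ℝ)..t, lam0 u))
    (a0 a1 : ℝ) (h0 : 0 ≤ a0) (h01 : a0 ≤ a1)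
    (ψ : ℝ) (hψ : ψ = Real.log (∫ u in a0..a1, lam0 u))
    (hpos : 0 < ∫ u in a0..a1, lam0 u) :
    (μ[|{ω | a0 ≤ T ω}] {ω | T ω ∈ Set.Ico a0 a1}).toReal
      = 1 - Real.exp (-Real.exp ((∑ i, x i * β i) + ψ)) :=
  prentice_gloeckler_cloglog_general μ T hT lam0 hint x β hS a0 a1 h0 h01 ψ hψ hpos
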